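/- Assuming the zero-range canonical measures μ_{Λ_l,k} satisfy a Poincaré inequality with constant C l² uniformly in the particle number k (spectral gap of order l⁻²), the environment generator L^{env}_{Λ_l} of the process seen from the tagged particle satisfies Var_{ν_{Λ_l,j}}(f) ≤ C₀ l² ⟨f(−L^{env}_{Λ_l} f)⟩_{ν_{Λ_l,j}} for all j ≥ 1, l ≥ 1, and f ∈ L²(ν_{Λ_l,j}), with C₀ independent of j and l. -/

import Mathlib

/-- `g(k)! = g(1) ⋯ g(k)`, with `g(0)! = 1`. -/
noncomputable def gfact (g : ℕ → ℝ) : ℕ → ℝ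
  | 0 => 1
  | n + 1 => gfact g n * g (n + 1)

/-- The cube `Λ_l = {-l, …, l}` in `ℤ`. -/
noncomputable abbrev Lam (l : ℕ) : Finset ℤ := Finset.Icc (-(l : ℤ)) l

/-- Sites of `Λ_l`. -/
abbrev Site (l : ℕ) := {x : ℤ // x ∈ Lam l}

/-- Particle configurations on `Λ_l`. -/
abbrev Conf (l : ℕ) := Site l → ℕ

/-- The origin as a point of `Λ_l`. -/
def origin (l : ℕ) : Site l := ⟨0, by simp [Finset.mem_Icc]⟩

/-- The configuration `η^{x,y}` obtained from `η` by moving a particle from `x` to `y`. -/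
def move {l : ℕ} (η : Conf l) (x y : Site l) : Conf l :=
  fun z => η z + (if z = y then 1 else 0) - (if z = x then 1 else 0)

/-- Expectation of `f` with respect to the (unnormalized) weight `w`. -/
noncomputable def Ew {l : ℕ} (w f : Conf l → ℝ) : ℝ :=
  (∑' η : Conf l, w η * f η) / ∑' η : Conf l, w η

/-- Variance of `f` with respect to the (unnormalized) weight `w`. -/
noncomputable def Varw {l : ℕ} (w f : Conf l → ℝ) : ℝ :=
  Ew w (fun η => (f η - Ew w f) ^ 2)

/-- Weight of the canonical zero-range measure `μ_{Λ_l,k}` with `k` particles. -/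
noncomputable def muCanW (g : ℕ → ℝ) (l k : ℕ) : Conf l → ℝ := fun η =>
  if ∑ x, η x = k then ∏ x, (gfact g (η x))⁻¹ else 0

/-- Weight of the size-biased canonical measure `ν_{Λ_l,j}`
(at least one particle at the origin, `j` particles in `Λ_l`). -/
noncomputable def nuCanW (g : ℕ → ℝ) (l j : ℕ) : Conf l → ℝ := fun η =>
  if 1 ≤ η (origin l) ∧ ∑ x, η x = j then
    (η (origin l) : ℝ) * ∏ x, (gfact g (η x))⁻¹
  else 0

/-- Jump rates of the homogeneous zero-range process: `g(η(x))` at every site. -/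
noncomputable def rateHom (g : ℕ → ℝ) (l : ℕ) (η : Conf l) (x : Site l) : ℝ :=
  g (η x)

/-- Jump rates of the environment process seen from the tagged particle:
`g(η(0))(η(0)-1)/η(0)` at the origin and `g(η(x))` elsewhere. -/
noncomputable def rateEnv (g : ℕ → ℝ) (l : ℕ) (η : Conf l) (x : Site l) : ℝ :=
  if x = origin l then g (η x) * ((η x : ℝ) - 1) / (η x) else g (η x)

/-- The Dirichlet form `⟨f(−Lf)⟩_w` of the zero-range generator on `Λ_l` with
jump probabilities `p`, site rates `rate`, and reversible weight `w`. -/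
noncomputable def dirichletForm {l : ℕ} (p : ℤ → ℝ)
    (rate : Conf l → Site l → ℝ) (w f : Conf l → ℝ) : ℝ :=
  (1 / 2) * ∑' η : Conf l, (w η / ∑' η' : Conf l, w η') *
    ∑ x : Site l, ∑ y : Site l,
      p ((y : ℤ) - (x : ℤ)) * rate η x * (f (move η x y) - f η) ^ 2

/- ### auxiliary development -/

namespace SGEP

/-- add one particle at the origin -/
def iota (l : ℕ) (ζ : Conf l) : Conf l :=
  fun x => ζ x + if x = origin l then 1 else 0

lemma iota_injective (l : ℕ) : Function.Injective (iota l) := by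
  intro ζ ζ' h
  funext x
  have := congrFun h x
  simpa [iota] using Nat.add_right_cancel this

lemma iota_origin {l : ℕ} (ζ : Conf l) : iota l ζ (origin l) = ζ (origin l) + 1 := by
  simp [iota]

lemma iota_ne {l : ℕ} (ζ : Conf l) {x : Site l} (hx : x ≠ origin l) : iota l ζ x = ζ x := by
  simp [iota, hx]

lemma sum_iota {l : ℕ} (ζ : Conf l) : ∑ x, iota l ζ x = (∑ x, ζ x) + 1 := by
  simp [iota, Finset.sum_add_distrib]

lemma mem_range_iota {l : ℕ} (η : Conf l) (h : 1 ≤ η (origin l)) :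
    η ∈ Set.range (iota l) := by
  refine ⟨fun x => η x - if x = origin l then 1 else 0, ?_⟩
  funext z
  by_cases hz : z = origin l
  · subst hz; simp [iota]; omega
  · simp [iota, hz]

lemma prod_iota {l : ℕ} (h : ℕ → ℝ) (ζ : Conf l) :
    ∏ x, h (iota l ζ x)
      = h (ζ (origin l) + 1) * ∏ x ∈ Finset.univ.erase (origin l), h (ζ x) := by
  rw [← Finset.mul_prod_erase Finset.univ (fun x => h (iota l ζ x)) (Finset.mem_univ (origin l))]
  rw [iota_origin]
  congr 1
  exact Finset.prod_congr rfl fun x hx => by rw [iota_ne ζ (Finset.mem_erase.mp hx).1]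

lemma prod_split {l : ℕ} (h : ℕ → ℝ) (ζ : Conf l) :
    ∏ x, h (ζ x) = h (ζ (origin l)) * ∏ x ∈ Finset.univ.erase (origin l), h (ζ x) :=
  (Finset.mul_prod_erase Finset.univ (fun x => h (ζ x)) (Finset.mem_univ (origin l))).symm

section g
variable {g : ℕ → ℝ} {a : ℝ} (ha : 0 < a)
  (hg : ∀ k : ℕ, a⁻¹ * k ≤ g k ∧ g k ≤ a * k)

include ha hg

lemma g_pos {k : ℕ} (hk : 1 ≤ k) : 0 < g k := by
  have h1 := (hg k).1
  have : (0:ℝ) < a⁻¹ * k := by positivity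
  linarith

lemma g_nonneg (k : ℕ) : 0 ≤ g k := by
  have h1 := (hg k).1
  have : (0:ℝ) ≤ a⁻¹ * k := by positivity
  linarith

lemma gfact_pos (k : ℕ) : 0 < gfact g k := by
  induction k with
  | zero => norm_num [gfact]
  | succ n ih => exact mul_pos ih (g_pos ha hg n.succ_pos)

lemma c_lb (k : ℕ) : a⁻¹ ≤ ((k:ℝ) + 1) / g (k + 1) := by
  have hgpos : 0 < g (k+1) := g_pos ha hg k.succ_pos
  rw [le_div_iff₀ hgpos]
  have h2 := (hg (k+1)).2
  push_cast at h2 ⊢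
  calc a⁻¹ * g (k+1) ≤ a⁻¹ * (a * ((k:ℝ)+1)) :=
        mul_le_mul_of_nonneg_left h2 (by positivity)
    _ = (k:ℝ) + 1 := by field_simp

lemma c_ub (k : ℕ) : ((k:ℝ) + 1) / g (k + 1) ≤ a := by
  have hgpos : 0 < g (k+1) := g_pos ha hg k.succ_pos
  rw [div_le_iff₀ hgpos]
  have h1 := (hg (k+1)).1
  push_cast at h1 ⊢
  calc (k:ℝ) + 1 = a * (a⁻¹ * ((k:ℝ)+1)) := by field_simp
    _ ≤ a * g (k+1) := mul_le_mul_of_nonneg_left h1 ha.le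

end g

end SGEP

namespace SGEP

/-- finite support set -/
noncomputable def F (l j : ℕ) : Finset (Conf l) := Fintype.piFinset (fun _ => Finset.range (j+1))

lemma mem_F_of {l j : ℕ} (η : Conf l) (h : ∑ x, η x ≤ j) : η ∈ F l j := by
  rw [F, Fintype.mem_piFinset]
  intro x
  rw [Finset.mem_range]
  have := Finset.single_le_sum (f := η) (fun i _ => Nat.zero_le _) (Finset.mem_univ x)
  omega

lemma nuCanW_eq_zero {g : ℕ → ℝ} {l j : ℕ} {η : Conf l} (h : η ∉ F l j) :
    nuCanW g l j η = 0 := by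
  rw [nuCanW, if_neg]
  rintro ⟨-, h2⟩
  exact h (mem_F_of η h2.le)

lemma muCanW_eq_zero {g : ℕ → ℝ} {l j k : ℕ} {η : Conf l} (hk : k ≤ j) (h : η ∉ F l j) :
    muCanW g l k η = 0 := by
  rw [muCanW, if_neg]
  intro h2
  exact h (mem_F_of η (h2.le.trans hk))

lemma nuCanW_iota_eq_zero {g : ℕ → ℝ} {l j : ℕ} {ζ : Conf l} (h : ζ ∉ F l j) :
    nuCanW g l j (iota l ζ) = 0 := by
  rw [nuCanW, if_neg]
  rintro ⟨-, h2⟩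
  rw [sum_iota] at h2
  exact h (mem_F_of ζ (by omega))

lemma nuCanW_eq_zero_of_not_range {g : ℕ → ℝ} {l j : ℕ} {η : Conf l}
    (h : η ∉ Set.range (iota l)) : nuCanW g l j η = 0 := by
  rw [nuCanW, if_neg]
  rintro ⟨h1, -⟩
  exact h (mem_range_iota η h1)

section g
variable {g : ℕ → ℝ} {a : ℝ} (ha : 0 < a)
  (hg : ∀ k : ℕ, a⁻¹ * k ≤ g k ∧ g k ≤ a * k)

include ha hg

lemma nuCanW_nonneg (l j : ℕ) (η : Conf l) : 0 ≤ nuCanW g l j η := by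
  rw [nuCanW]
  split
  · exact mul_nonneg (Nat.cast_nonneg _)
      (Finset.prod_nonneg fun x _ => (inv_pos.mpr (gfact_pos ha hg _)).le)
  · exact le_rfl

lemma muCanW_nonneg (l k : ℕ) (η : Conf l) : 0 ≤ muCanW g l k η := by
  rw [muCanW]
  split
  · exact Finset.prod_nonneg fun x _ => (inv_pos.mpr (gfact_pos ha hg _)).le
  · exact le_rfl

/-- the key weight identity -/
lemma nu_iota {l j : ℕ} (hj : 1 ≤ j) (ζ : Conf l) :
    nuCanW g l j (iota l ζ)
      = ((ζ (origin l) : ℝ) + 1) / g (ζ (origin l) + 1) * muCanW g l (j-1) ζ := by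
  rw [nuCanW, muCanW]
  have hsum : ∑ x, iota l ζ x = (∑ x, ζ x) + 1 := sum_iota ζ
  by_cases hc : ∑ x, ζ x = j - 1
  · rw [if_pos ⟨by rw [iota_origin]; omega, by omega⟩, if_pos hc]
    rw [prod_iota (fun n => (gfact g n)⁻¹), prod_split (fun n => (gfact g n)⁻¹) ζ,
      iota_origin]
    have h1 : gfact g (ζ (origin l) + 1) = gfact g (ζ (origin l)) * g (ζ (origin l) + 1) := rfl
    rw [h1]
    have hgf : gfact g (ζ (origin l)) ≠ 0 := (gfact_pos ha hg _).ne'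
    have hgp : g (ζ (origin l) + 1) ≠ 0 := (g_pos ha hg (Nat.succ_pos _)).ne'
    push_cast
    field_simp
  · rw [if_neg, if_neg hc]
    · ring
    · rintro ⟨-, h2⟩; omega

end g

end SGEP

namespace SGEP

lemma move_iota {l : ℕ} (ζ : Conf l) (x y : Site l) (hx : 1 ≤ ζ x) :
    move (iota l ζ) x y = iota l (move ζ x y) := by
  funext z
  by_cases hzx : z = x
  · subst hzx
    simp only [move, iota]
    split_ifs <;> omega
  · simp only [move, iota, if_neg hzx]
    split_ifs <;> omega

section g
variable {g : ℕ → ℝ} {a : ℝ} (ha : 0 < a) (hg0 : g 0 = 0)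
  (hg : ∀ k : ℕ, a⁻¹ * k ≤ g k ∧ g k ≤ a * k)

include ha hg

include hg0

lemma rateEnv_nonneg (l : ℕ) (η : Conf l) (x : Site l) : 0 ≤ rateEnv g l η x := by
  rw [rateEnv]
  split
  · rcases Nat.eq_zero_or_pos (η x) with h0 | h1
    · rw [h0]; simp [hg0]
    · apply div_nonneg _ (Nat.cast_nonneg _)
      apply mul_nonneg (g_nonneg ha hg _)
      have : (1:ℝ) ≤ (η x : ℝ) := by exact_mod_cast h1
      linarith
  · exact g_nonneg ha hg _

omit hg0 in
/-- key pointwise comparison of weight × rate -/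
lemma key_rate {l j : ℕ} (hj : 1 ≤ j) (ζ : Conf l) (x : Site l) :
    a⁻¹ * (muCanW g l (j-1) ζ * rateHom g l ζ x)
      ≤ nuCanW g l j (iota l ζ) * rateEnv g l (iota l ζ) x := by
  have hμ : 0 ≤ muCanW g l (j-1) ζ := muCanW_nonneg ha hg l _ ζ
  rw [nu_iota ha hg hj ζ]
  by_cases hx : x = origin l
  · subst hx
    rw [rateEnv, if_pos rfl, rateHom, iota_origin]
    set k := ζ (origin l) with hk
    have hgp : 0 < g (k + 1) := g_pos ha hg (Nat.succ_pos _)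
    have hknz : ((k:ℝ) + 1) ≠ 0 := by positivity
    have heq : ((k:ℝ) + 1) / g (k + 1) * muCanW g l (j-1) ζ *
        (g (k + 1) * ((↑(k+1) : ℝ) - 1) / (↑(k+1) : ℝ))
        = (k : ℝ) * muCanW g l (j-1) ζ := by
      push_cast
      field_simp
      ring
    rw [heq]
    have h2 := (hg k).2
    calc a⁻¹ * (muCanW g l (j-1) ζ * g k) ≤ a⁻¹ * (muCanW g l (j-1) ζ * (a * k)) := by
          apply mul_le_mul_of_nonneg_left (mul_le_mul_of_nonneg_left h2 hμ) (by positivity)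
      _ = (k : ℝ) * muCanW g l (j-1) ζ := by field_simp
  · rw [rateEnv, if_neg hx, rateHom, iota_ne ζ hx]
    have hcb := c_lb ha hg (ζ (origin l))
    have := mul_le_mul_of_nonneg_right hcb (mul_nonneg hμ (g_nonneg ha hg (ζ x)))
    calc a⁻¹ * (muCanW g l (j-1) ζ * g (ζ x))
        ≤ ((ζ (origin l):ℝ) + 1) / g (ζ (origin l) + 1) * (muCanW g l (j-1) ζ * g (ζ x)) := this
      _ = _ := by ring

end g

end SGEP

namespace SGEP

lemma Ew_eq_sum {l : ℕ} (w : Conf l → ℝ) (s : Finset (Conf l))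
    (hs : ∀ η ∉ s, w η = 0) (h : Conf l → ℝ) :
    Ew w h = (∑ η ∈ s, w η * h η) / ∑ η ∈ s, w η := by
  rw [Ew, tsum_eq_sum (s := s) (fun η hη => by rw [hs η hη, zero_mul]),
    tsum_eq_sum (s := s) hs]

lemma varw_le_sq {l : ℕ} (w f : Conf l → ℝ) (s : Finset (Conf l))
    (hw : ∀ η, 0 ≤ w η) (hs : ∀ η ∉ s, w η = 0)
    (hZ : 0 < ∑ η ∈ s, w η) (m : ℝ) :
    Varw w f ≤ Ew w (fun η => (f η - m) ^ 2) := by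
  set Z := ∑ η ∈ s, w η with hZdef
  set S1 := ∑ η ∈ s, w η * f η with hS1
  set S2 := ∑ η ∈ s, w η * (f η) ^ 2 with hS2
  have key : ∀ c : ℝ, Ew w (fun η => (f η - c) ^ 2) = (S2 - 2 * c * S1 + c ^ 2 * Z) / Z := by
    intro c
    rw [Ew_eq_sum w s hs]
    congr 1
    have : ∀ η, w η * (f η - c) ^ 2
        = w η * (f η) ^ 2 - (2 * c) * (w η * f η) + c ^ 2 * w η := fun η => by ring
    simp only [this]
    rw [Finset.sum_add_distrib, Finset.sum_sub_distrib, ← Finset.mul_sum, ← Finset.mul_sum]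
  have hE : Ew w f = S1 / Z := Ew_eq_sum w s hs f
  rw [Varw, key, key, hE]
  rw [div_le_div_iff_of_pos_right hZ]
  obtain ⟨E, hE'⟩ : ∃ E, S1 = E * Z := ⟨S1 / Z, (div_mul_cancel₀ S1 hZ.ne').symm⟩
  have hEq : S1 / Z = E := by rw [hE', mul_div_cancel_right₀ E hZ.ne']
  rw [hEq, hE']
  nlinarith [mul_nonneg (sq_nonneg (m - E)) hZ.le]

lemma dirichlet_eq_sum {l : ℕ} (p : ℤ → ℝ) (rate : Conf l → Site l → ℝ)
    (w f : Conf l → ℝ) (s : Finset (Conf l)) (hs : ∀ η ∉ s, w η = 0) :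
    dirichletForm p rate w f
      = (1 / 2) * ((∑ η ∈ s, w η * ∑ x : Site l, ∑ y : Site l,
          p ((y : ℤ) - (x : ℤ)) * rate η x * (f (move η x y) - f η) ^ 2)
        / ∑ η ∈ s, w η) := by
  rw [dirichletForm, tsum_eq_sum (s := s) hs]
  congr 1
  have : ∀ η, (w η / ∑ η' ∈ s, w η') *
      (∑ x : Site l, ∑ y : Site l,
        p ((y : ℤ) - (x : ℤ)) * rate η x * (f (move η x y) - f η) ^ 2)
      = (w η * ∑ x : Site l, ∑ y : Site l,
        p ((y : ℤ) - (x : ℤ)) * rate η x * (f (move η x y) - f η) ^ 2) / ∑ η' ∈ s, w η' :=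
    fun η => by ring
  simp only [this]
  rw [tsum_eq_sum (s := s) (fun η hη => by rw [hs η hη, zero_mul, zero_div]),
    Finset.sum_div]

end SGEP

/-- Assuming the canonical zero-range measures `μ_{Λ_l,k}` satisfy a
Poincaré inequality with constant `C l²` uniformly in the particle number `k`
(spectral gap of order `l⁻²`), the environment generator `L^{env}_{Λ_l}` of the
process seen from the tagged particle satisfies
`Var_{ν_{Λ_l,j}}(f) ≤ C₀ l² ⟨f(−L^{env}_{Λ_l} f)⟩_{ν_{Λ_l,j}}`
for all `j ≥ 1`, `l ≥ 1` and all `f`, with `C₀` independent of `j` and `l`. -/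
theorem spectral_gap_environment_process
    (g : ℕ → ℝ) (hg0 : g 0 = 0) (a : ℝ) (ha : 0 < a)
    (hg : ∀ k : ℕ, a⁻¹ * k ≤ g k ∧ g k ≤ a * k)
    (p : ℤ → ℝ) (hp : ∀ z, 0 ≤ p z) (hsymm : ∀ z, p (-z) = p z)
    (C : ℝ) (hC : 0 < C)
    (hgap : ∀ l : ℕ, 1 ≤ l → ∀ k : ℕ, ∀ f : Conf l → ℝ,
      Varw (muCanW g l k) f ≤
        C * (l : ℝ) ^ 2 * dirichletForm p (rateHom g l) (muCanW g l k) f) :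
    ∃ C₀ : ℝ, 0 < C₀ ∧ ∀ l : ℕ, 1 ≤ l → ∀ j : ℕ, 1 ≤ j → ∀ f : Conf l → ℝ,
      Varw (nuCanW g l j) f ≤
        C₀ * (l : ℝ) ^ 2 * dirichletForm p (rateEnv g l) (nuCanW g l j) f := by
  refine ⟨C * a ^ 4, by positivity, ?_⟩
  intro l hl j hj f
  classical
  obtain ⟨f', hf'⟩ : ∃ f' : Conf l → ℝ, f' = fun ζ => f (SGEP.iota l ζ) := ⟨_, rfl⟩
  have hι := SGEP.iota_injective l
  have hνz : ∀ η ∉ SGEP.F l j, nuCanW g l j η = 0 := fun η h => SGEP.nuCanW_eq_zero h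
  have hμz : ∀ η ∉ SGEP.F l j, muCanW g l (j-1) η = 0 :=
    fun η h => SGEP.muCanW_eq_zero (Nat.sub_le j 1) h
  have hν0 : ∀ η, 0 ≤ nuCanW g l j η := SGEP.nuCanW_nonneg ha hg l j
  have hμ0 : ∀ η, 0 ≤ muCanW g l (j-1) η := SGEP.muCanW_nonneg ha hg l (j-1)
  obtain ⟨Zν, hZν⟩ : ∃ Z : ℝ, Z = ∑ η ∈ SGEP.F l j, nuCanW g l j η := ⟨_, rfl⟩
  obtain ⟨Zμ, hZμ⟩ : ∃ Z : ℝ, Z = ∑ η ∈ SGEP.F l j, muCanW g l (j-1) η := ⟨_, rfl⟩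
  -- Zμ is positive
  have hZμpos : 0 < Zμ := by
    rw [hZμ]
    have hmem : (fun x => if x = origin l then j - 1 else 0 : Conf l) ∈ SGEP.F l j :=
      SGEP.mem_F_of _ (by simp)
    apply Finset.sum_pos' (fun η _ => hμ0 η) ⟨_, hmem, ?_⟩
    rw [muCanW, if_pos (by simp)]
    exact Finset.prod_pos fun x _ => inv_pos.mpr (SGEP.gfact_pos ha hg _)
  -- reindexing sums against ν by adding a particle at the origin
  have hreidx : ∀ G : Conf l → ℝ, ∑ η ∈ SGEP.F l j, nuCanW g l j η * G η
      = ∑ ζ ∈ SGEP.F l j, nuCanW g l j (SGEP.iota l ζ) * G (SGEP.iota l ζ) := by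
    intro G
    have hsupp : Function.support (fun η => nuCanW g l j η * G η) ⊆ Set.range (SGEP.iota l) := by
      intro η hη
      by_contra hr
      refine hη ?_
      show nuCanW g l j η * G η = 0
      rw [SGEP.nuCanW_eq_zero_of_not_range hr, zero_mul]
    calc ∑ η ∈ SGEP.F l j, nuCanW g l j η * G η
        = ∑' η, nuCanW g l j η * G η :=
          (tsum_eq_sum (fun η hη => by rw [hνz η hη, zero_mul])).symm
      _ = ∑' ζ, nuCanW g l j (SGEP.iota l ζ) * G (SGEP.iota l ζ) :=
          (Function.Injective.tsum_eq hι hsupp).symm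
      _ = ∑ ζ ∈ SGEP.F l j, nuCanW g l j (SGEP.iota l ζ) * G (SGEP.iota l ζ) :=
          tsum_eq_sum (fun ζ hζ => by rw [SGEP.nuCanW_iota_eq_zero hζ, zero_mul])
  -- bounds on Zν
  have hZν_eq : Zν = ∑ ζ ∈ SGEP.F l j, nuCanW g l j (SGEP.iota l ζ) := by
    rw [hZν]
    have := hreidx (fun _ => 1)
    simpa using this
  have hZνub : Zν ≤ a * Zμ := by
    rw [hZν_eq, hZμ, Finset.mul_sum]
    refine Finset.sum_le_sum fun ζ _ => ?_
    rw [SGEP.nu_iota ha hg hj ζ]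
    exact mul_le_mul_of_nonneg_right (SGEP.c_ub ha hg _) (hμ0 ζ)
  have hZνlb : a⁻¹ * Zμ ≤ Zν := by
    rw [hZν_eq, hZμ, Finset.mul_sum]
    refine Finset.sum_le_sum fun ζ _ => ?_
    rw [SGEP.nu_iota ha hg hj ζ]
    exact mul_le_mul_of_nonneg_right (SGEP.c_lb ha hg _) (hμ0 ζ)
  have hZνpos : 0 < Zν := lt_of_lt_of_le (by positivity) hZνlb
  -- step 1 : variance comparison
  obtain ⟨m, hm⟩ : ∃ m : ℝ, m = Ew (muCanW g l (j-1)) f' := ⟨_, rfl⟩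
  obtain ⟨Sμ, hSμ⟩ : ∃ S : ℝ,
      S = ∑ ζ ∈ SGEP.F l j, muCanW g l (j-1) ζ * (f' ζ - m) ^ 2 := ⟨_, rfl⟩
  have hSμ0 : 0 ≤ Sμ := by
    rw [hSμ]
    exact Finset.sum_nonneg fun ζ _ => mul_nonneg (hμ0 ζ) (sq_nonneg _)
  have hvar : Varw (nuCanW g l j) f ≤ a ^ 2 * Varw (muCanW g l (j-1)) f' := by
    have h1 : Varw (nuCanW g l j) f ≤ Ew (nuCanW g l j) (fun η => (f η - m) ^ 2) := by
      apply SGEP.varw_le_sq _ f (SGEP.F l j) hν0 hνz _ m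
      rw [← hZν]; exact hZνpos
    have h2 : Ew (nuCanW g l j) (fun η => (f η - m) ^ 2)
        = (∑ η ∈ SGEP.F l j, nuCanW g l j η * (f η - m) ^ 2) / Zν := by
      rw [hZν]
      exact SGEP.Ew_eq_sum _ (SGEP.F l j) hνz _
    have h3 : ∑ η ∈ SGEP.F l j, nuCanW g l j η * (f η - m) ^ 2 ≤ a * Sμ := by
      rw [hreidx (fun η => (f η - m) ^ 2), hSμ, Finset.mul_sum]
      refine Finset.sum_le_sum fun ζ _ => ?_
      rw [SGEP.nu_iota ha hg hj ζ]
      have hc := SGEP.c_ub ha hg (ζ (origin l))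
      have hfζ : f (SGEP.iota l ζ) = f' ζ := by rw [hf']
      rw [hfζ]
      calc (↑(ζ (origin l)) + 1) / g (ζ (origin l) + 1) * muCanW g l (j-1) ζ * (f' ζ - m) ^ 2
          ≤ a * muCanW g l (j-1) ζ * (f' ζ - m) ^ 2 :=
            mul_le_mul_of_nonneg_right (mul_le_mul_of_nonneg_right hc (hμ0 ζ)) (sq_nonneg _)
        _ = a * (muCanW g l (j-1) ζ * (f' ζ - m) ^ 2) := by ring
    have h5 : Varw (muCanW g l (j-1)) f' = Sμ / Zμ := by
      rw [Varw, ← hm, hSμ, hZμ]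
      exact SGEP.Ew_eq_sum _ (SGEP.F l j) hμz _
    calc Varw (nuCanW g l j) f
        ≤ (∑ η ∈ SGEP.F l j, nuCanW g l j η * (f η - m) ^ 2) / Zν := by rw [← h2]; exact h1
      _ ≤ (a * Sμ) / Zν := by gcongr
      _ ≤ (a * Sμ) / (a⁻¹ * Zμ) := by gcongr
      _ = a ^ 2 * (Sμ / Zμ) := by field_simp
      _ = a ^ 2 * Varw (muCanW g l (j-1)) f' := by rw [h5]
  -- step 2 : Dirichlet form comparison
  obtain ⟨Nν, hNν⟩ : ∃ N : ℝ, N = ∑ η ∈ SGEP.F l j, nuCanW g l j η *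
      ∑ x : Site l, ∑ y : Site l,
        p ((y:ℤ) - (x:ℤ)) * rateEnv g l η x * (f (move η x y) - f η) ^ 2 := ⟨_, rfl⟩
  obtain ⟨Nμ, hNμ⟩ : ∃ N : ℝ, N = ∑ η ∈ SGEP.F l j, muCanW g l (j-1) η *
      ∑ x : Site l, ∑ y : Site l,
        p ((y:ℤ) - (x:ℤ)) * rateHom g l η x * (f' (move η x y) - f' η) ^ 2 := ⟨_, rfl⟩
  have hNν0 : 0 ≤ Nν := by
    rw [hNν]
    refine Finset.sum_nonneg fun η _ => mul_nonneg (hν0 η) ?_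
    refine Finset.sum_nonneg fun x _ => Finset.sum_nonneg fun y _ =>
      mul_nonneg (mul_nonneg (hp _) (SGEP.rateEnv_nonneg ha hg0 hg l η x)) (sq_nonneg _)
  have hterm : ∀ (ζ : Conf l) (x y : Site l),
      a⁻¹ * (muCanW g l (j-1) ζ *
        (p ((y:ℤ) - (x:ℤ)) * rateHom g l ζ x * (f' (move ζ x y) - f' ζ) ^ 2))
      ≤ nuCanW g l j (SGEP.iota l ζ) *
        (p ((y:ℤ) - (x:ℤ)) * rateEnv g l (SGEP.iota l ζ) x *
          (f (move (SGEP.iota l ζ) x y) - f (SGEP.iota l ζ)) ^ 2) := by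
    intro ζ x y
    by_cases h1 : 1 ≤ ζ x
    · have hmv : move (SGEP.iota l ζ) x y = SGEP.iota l (move ζ x y) :=
        SGEP.move_iota ζ x y h1
      rw [hmv]
      have hfa : f' (move ζ x y) = f (SGEP.iota l (move ζ x y)) := by rw [hf']
      have hfb : f' ζ = f (SGEP.iota l ζ) := by rw [hf']
      rw [hfa, hfb]
      have hA := SGEP.key_rate ha hg hj ζ x
      have hps : 0 ≤ p ((y:ℤ) - (x:ℤ)) *
          (f (SGEP.iota l (move ζ x y)) - f (SGEP.iota l ζ)) ^ 2 :=
        mul_nonneg (hp _) (sq_nonneg _)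
      calc a⁻¹ * (muCanW g l (j-1) ζ *
            (p ((y:ℤ) - (x:ℤ)) * rateHom g l ζ x *
              (f (SGEP.iota l (move ζ x y)) - f (SGEP.iota l ζ)) ^ 2))
          = (a⁻¹ * (muCanW g l (j-1) ζ * rateHom g l ζ x)) *
              (p ((y:ℤ) - (x:ℤ)) *
                (f (SGEP.iota l (move ζ x y)) - f (SGEP.iota l ζ)) ^ 2) := by ring
        _ ≤ (nuCanW g l j (SGEP.iota l ζ) * rateEnv g l (SGEP.iota l ζ) x) *
              (p ((y:ℤ) - (x:ℤ)) *
                (f (SGEP.iota l (move ζ x y)) - f (SGEP.iota l ζ)) ^ 2) :=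
            mul_le_mul_of_nonneg_right hA hps
        _ = _ := by ring
    · have h0 : ζ x = 0 := by omega
      have hL : rateHom g l ζ x = 0 := by rw [rateHom, h0, hg0]
      rw [hL]
      simp only [mul_zero, zero_mul]
      exact mul_nonneg (hν0 _) (mul_nonneg
        (mul_nonneg (hp _) (SGEP.rateEnv_nonneg ha hg0 hg l _ x)) (sq_nonneg _))
  have hpoint : ∀ ζ : Conf l,
      a⁻¹ * (muCanW g l (j-1) ζ * ∑ x : Site l, ∑ y : Site l,
        p ((y:ℤ) - (x:ℤ)) * rateHom g l ζ x * (f' (move ζ x y) - f' ζ) ^ 2)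
      ≤ nuCanW g l j (SGEP.iota l ζ) * ∑ x : Site l, ∑ y : Site l,
        p ((y:ℤ) - (x:ℤ)) * rateEnv g l (SGEP.iota l ζ) x *
          (f (move (SGEP.iota l ζ) x y) - f (SGEP.iota l ζ)) ^ 2 := by
    intro ζ
    simp only [Finset.mul_sum]
    exact Finset.sum_le_sum fun x _ => Finset.sum_le_sum fun y _ => hterm ζ x y
  have hNcmp : a⁻¹ * Nμ ≤ Nν := by
    rw [hNμ, hNν, hreidx (fun η => ∑ x : Site l, ∑ y : Site l,
      p ((y:ℤ) - (x:ℤ)) * rateEnv g l η x * (f (move η x y) - f η) ^ 2), Finset.mul_sum]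
    exact Finset.sum_le_sum fun ζ _ => hpoint ζ
  have hDν : dirichletForm p (rateEnv g l) (nuCanW g l j) f = (1/2) * (Nν / Zν) := by
    rw [hNν, hZν]
    exact SGEP.dirichlet_eq_sum p (rateEnv g l) _ f (SGEP.F l j) hνz
  have hDμ : dirichletForm p (rateHom g l) (muCanW g l (j-1)) f' = (1/2) * (Nμ / Zμ) := by
    rw [hNμ, hZμ]
    exact SGEP.dirichlet_eq_sum p (rateHom g l) _ f' (SGEP.F l j) hμz
  have hD : dirichletForm p (rateHom g l) (muCanW g l (j-1)) f'
      ≤ a ^ 2 * dirichletForm p (rateEnv g l) (nuCanW g l j) f := by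
    rw [hDν, hDμ]
    have h6 : Nμ ≤ a * Nν := by
      have h := mul_le_mul_of_nonneg_left hNcmp ha.le
      calc Nμ = a * (a⁻¹ * Nμ) := by field_simp
        _ ≤ a * Nν := h
    have h7 : a⁻¹ * Zν ≤ Zμ := by
      have h := mul_le_mul_of_nonneg_left hZνub (inv_nonneg.mpr ha.le)
      calc a⁻¹ * Zν ≤ a⁻¹ * (a * Zμ) := h
        _ = Zμ := by field_simp
    have h8 : Nμ / Zμ ≤ (a * Nν) / (a⁻¹ * Zν) :=
      div_le_div₀ (by positivity) h6 (by positivity) h7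
    calc (1/2) * (Nμ / Zμ) ≤ (1/2) * ((a * Nν) / (a⁻¹ * Zν)) := by linarith
      _ = a ^ 2 * ((1/2) * (Nν / Zν)) := by
          field_simp
  -- conclusion
  have hgap' := hgap l hl (j-1) f'
  calc Varw (nuCanW g l j) f
      ≤ a ^ 2 * Varw (muCanW g l (j-1)) f' := hvar
    _ ≤ a ^ 2 * (C * (l:ℝ) ^ 2 * dirichletForm p (rateHom g l) (muCanW g l (j-1)) f') :=
        mul_le_mul_of_nonneg_left hgap' (by positivity)
    _ ≤ a ^ 2 * (C * (l:ℝ) ^ 2 *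
          (a ^ 2 * dirichletForm p (rateEnv g l) (nuCanW g l j) f)) :=
        mul_le_mul_of_nonneg_left (mul_le_mul_of_nonneg_left hD (by positivity)) (by positivity)
    _ = C * a ^ 4 * (l:ℝ) ^ 2 * dirichletForm p (rateEnv g l) (nuCanW g l j) f := by ring
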